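/- Let a_1, ..., a_n be unit vectors in R^3 and p_1, ..., p_n ≥ 0 with Σ_i p_i = 2 and Σ_i p_i a_i = 0, and let f(x) = Σ_i p_i Θ(x · a_i) with Θ(t) = max(t,0). Then the sum of f over the eight cube vertices v_{s_x s_y s_z} = (s_x, s_y, s_z)^T, s_k ∈ {±1}, is at most 8. -/

import Mathlib

/-!
The inner products `g s = ⟪v_s, a⟫` over the eight cube vertices sum to `0` (the vertices come in
antipodal pairs) and their squares sum to `8 ‖a‖²` (the vertices form a tight frame). Hence
`∑ max (g s) 0 = ½ ∑ |g s| ≤ ½ √(8 · 8 ‖a‖²) = 4 ‖a‖` by Cauchy–Schwarz, and summing with the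
weights `p i`, whose total is `2`, gives `8`.
-/

open RealInnerProductSpace Finset

/-- The vertex `(s_x, s_y, s_z)` of the cube `[-1,1]^3`, signs encoded by booleans. -/
noncomputable def cubeVtx (s : Fin 3 → Bool) : EuclideanSpace ℝ (Fin 3) :=
  WithLp.toLp 2 (fun k => if s k then 1 else -1)

theorem Fintype.sum_fun_fin_three {α M : Type*} [Fintype α] [AddCommMonoid M]
    (F : (Fin 3 → α) → M) : ∑ s, F s = ∑ x : α, ∑ y : α, ∑ z : α, F ![x, y, z] := by
  simp only [← (Fin.consEquiv fun _ => α).sum_comp, Fintype.sum_prod_type, Fintype.sum_unique]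
  rfl

theorem sum_max_zero_eq_half_sum_abs {ι : Type*} (s : Finset ι) {g : ι → ℝ}
    (hg : ∑ i ∈ s, g i = 0) : ∑ i ∈ s, max (g i) 0 = (∑ i ∈ s, |g i|) / 2 := by
  have hneg : ∑ i ∈ s, max (g i) 0 = ∑ i ∈ s, max (-g i) 0 := by
    rw [← sub_eq_zero, ← sum_sub_distrib]
    simpa only [max_zero_sub_max_neg_zero_eq_self] using hg
  rw [eq_div_iff two_ne_zero, mul_two]
  nth_rewrite 2 [hneg]
  rw [← sum_add_distrib]
  simp only [max_zero_add_max_neg_zero_eq_abs_self]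

theorem sum_abs_sq_le_card_mul_sum_sq {ι : Type*} (s : Finset ι) (g : ι → ℝ) :
    (∑ i ∈ s, |g i|) ^ 2 ≤ #s * ∑ i ∈ s, g i ^ 2 := by
  simpa only [sq_abs] using sq_sum_le_card_mul_sum_sq (s := s) (f := fun i => |g i|)

theorem inner_cubeVtx (s : Fin 3 → Bool) (a : EuclideanSpace ℝ (Fin 3)) :
    ⟪cubeVtx s, a⟫ = ∑ k, (if s k then 1 else -1) * a k := by
  simp [PiLp.inner_apply, cubeVtx, mul_comm]

theorem sum_inner_cubeVtx (a : EuclideanSpace ℝ (Fin 3)) : ∑ s, ⟪cubeVtx s, a⟫ = 0 := by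
  simp only [inner_cubeVtx, Fin.sum_univ_three, Fintype.sum_fun_fin_three, Fintype.sum_bool,
    Matrix.cons_val, ↓reduceIte, Bool.false_eq_true]
  ring

theorem sum_inner_cubeVtx_sq (a : EuclideanSpace ℝ (Fin 3)) :
    ∑ s, ⟪cubeVtx s, a⟫ ^ 2 = 8 * ‖a‖ ^ 2 := by
  simp only [inner_cubeVtx, EuclideanSpace.real_norm_sq_eq, Fin.sum_univ_three,
    Fintype.sum_fun_fin_three, Fintype.sum_bool, Matrix.cons_val, ↓reduceIte, Bool.false_eq_true]
  ring

theorem sum_max_inner_cubeVtx_le (a : EuclideanSpace ℝ (Fin 3)) :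
    ∑ s, max ⟪cubeVtx s, a⟫ 0 ≤ 4 * ‖a‖ := by
  have hcs : (∑ s, |⟪cubeVtx s, a⟫|) ^ 2 ≤ (8 * ‖a‖) ^ 2 := by
    calc (∑ s, |⟪cubeVtx s, a⟫|) ^ 2 ≤ #univ * ∑ s, ⟪cubeVtx s, a⟫ ^ 2 :=
          sum_abs_sq_le_card_mul_sum_sq _ _
      _ = (8 * ‖a‖) ^ 2 := by
          rw [sum_inner_cubeVtx_sq, card_univ, Fintype.card_pi]
          simp only [Fintype.card_bool, prod_const, card_univ, Fintype.card_fin]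
          ring
  rw [sum_max_zero_eq_half_sum_abs _ (sum_inner_cubeVtx a)]
  linarith [le_of_sq_le_sq hcs (by positivity)]

theorem sum_f_cubeVtx_le_eight_general
    (n : ℕ) (a : Fin n → EuclideanSpace ℝ (Fin 3)) (p : Fin n → ℝ)
    (ha : ∀ i, ‖a i‖ = 1) (hp : ∀ i, 0 ≤ p i)
    (hp2 : ∑ i, p i = 2) :
    ∑ s : Fin 3 → Bool, (∑ i, p i * max ⟪cubeVtx s, a i⟫ 0) ≤ 8 := by
  calc ∑ s : Fin 3 → Bool, ∑ i, p i * max ⟪cubeVtx s, a i⟫ 0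
      = ∑ i, p i * ∑ s, max ⟪cubeVtx s, a i⟫ 0 := by rw [sum_comm]; simp only [mul_sum]
    _ ≤ ∑ i, p i * (4 * ‖a i‖) :=
        sum_le_sum fun i _ => mul_le_mul_of_nonneg_left (sum_max_inner_cubeVtx_le (a i)) (hp i)
    _ = 8 := by simp only [ha, mul_one, ← sum_mul, hp2]; norm_num

theorem sum_f_cubeVtx_le_eight
    (n : ℕ) (a : Fin n → EuclideanSpace ℝ (Fin 3)) (p : Fin n → ℝ)
    (ha : ∀ i, ‖a i‖ = 1) (hp : ∀ i, 0 ≤ p i)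
    (hp2 : ∑ i, p i = 2) (hsum : ∑ i, p i • a i = 0) :
    ∑ s : Fin 3 → Bool, (∑ i, p i * max ⟪cubeVtx s, a i⟫ 0) ≤ 8 :=
  sum_f_cubeVtx_le_eight_general n a p ha hp hp2
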